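/- In a star-continuous partially additive Kleene algebra, if ⟨{a_1,…,a_k}⟩ = ⟨{b_1,…,b_l}⟩ as star-ideals, then ⟨(a_1*·…·a_k*)*⟩ = ⟨(b_1*·…·b_l*)*⟩. -/

import Mathlib

/-- A partially additive Kleene algebra: partial `+` (via `summable`), total `·`, `*`,
constants 0 and 1, satisfying the PKA axioms. -/
structure PKA (K : Type*) where
  summable : K → K → Prop
  add : K → K → K
  mul : K → K → K
  star : K → K
  zero : K
  one : K
  add_assoc : ∀ x y z, summable x y → summable (add x y) z → summable y z →
    summable x (add y z) ∧ add (add x y) z = add x (add y z)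
  add_comm : ∀ x y, summable x y → summable y x ∧ add x y = add y x
  summable_zero : ∀ x, summable x zero
  add_zero : ∀ x, add x zero = x
  summable_self : ∀ x, summable x x
  add_self : ∀ x, add x x = x
  mul_assoc : ∀ x y z, mul x (mul y z) = mul (mul x y) z
  one_mul : ∀ x, mul one x = x
  mul_one : ∀ x, mul x one = x
  left_distrib : ∀ x y z, summable x y →
    summable (mul z x) (mul z y) ∧ mul z (add x y) = add (mul z x) (mul z y)
  right_distrib : ∀ x y z, summable x y →
    summable (mul x z) (mul y z) ∧ mul (add x y) z = add (mul x z) (mul y z)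
  zero_mul : ∀ x, mul zero x = zero
  mul_zero : ∀ x, mul x zero = zero
  one_le_star : ∀ x, summable one (star x) ∧ add one (star x) = star x
  mul_star_le_star : ∀ x,
    summable (mul x (star x)) (star x) ∧ add (mul x (star x)) (star x) = star x
  star_mul_le_star : ∀ x,
    summable (mul (star x) x) (star x) ∧ add (mul (star x) x) (star x) = star x
  star_ind_left : ∀ a x, (summable (mul a x) x ∧ add (mul a x) x = x) →
    summable (mul (star a) x) x ∧ add (mul (star a) x) x = x
  star_ind_right : ∀ a x, (summable (mul x a) x ∧ add (mul x a) x = x) →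
    summable (mul x (star a)) x ∧ add (mul x (star a)) x = x

/-- The natural order on a PKA: `a ≤ b` iff `a` is summable with `b` and `a + b = b`. -/
def PKA.le {K : Type*} (P : PKA K) (a b : K) : Prop :=
  P.summable a b ∧ P.add a b = b

/-- Powers: `b^0 = 1`, `b^(n+1) = b·b^n`. -/
def PKA.pow {K : Type*} (P : PKA K) (b : K) : ℕ → K
  | 0 => P.one
  | n + 1 => P.mul b (P.pow b n)

/-- Star-continuity: `a·b*·c` is the least upper bound of `{a·b^n·c | n < ω}`. -/
def PKA.StarContinuous {K : Type*} (P : PKA K) : Prop :=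
  ∀ a b c,
    (∀ n, P.le (P.mul a (P.mul (P.pow b n) c)) (P.mul a (P.mul (P.star b) c))) ∧
    (∀ w, (∀ n, P.le (P.mul a (P.mul (P.pow b n) c)) w) →
      P.le (P.mul a (P.mul (P.star b) c)) w)

/-- A star-ideal: nonempty, closed under defined sums, downward closed,
and closed under the star rule. -/
def PKA.IsStarIdeal {K : Type*} (P : PKA K) (A : Set K) : Prop :=
  A.Nonempty ∧
  (∀ a ∈ A, ∀ b ∈ A, P.summable a b → P.add a b ∈ A) ∧
  (∀ x y, y ∈ A → P.le x y → x ∈ A) ∧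
  (∀ a b c, (∀ n, P.mul a (P.mul (P.pow b n) c) ∈ A) →
    P.mul a (P.mul (P.star b) c) ∈ A)

/-- The star-ideal generated by `A`: the intersection of all star-ideals containing `A`. -/
def PKA.gen {K : Type*} (P : PKA K) (A : Set K) : Set K :=
  ⋂₀ {I | P.IsStarIdeal I ∧ A ⊆ I}

/-- (a_1 * · … · a_k *) * for a finite list of generators. -/
def PKA.listStar {K : Type*} (P : PKA K) (l : List K) : K :=
  P.star (l.foldr (fun x acc => P.mul (P.star x) acc) P.one)

/-!
Star-continuity makes every principal down-set `{x | x ≤ M}` a star-ideal, so each generator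
of one list lies below `(b₁*⋯bₗ*)*` as soon as the generated star-ideals agree. The star laws
then give `(a₁*⋯aₖ*)* ≤ (b₁*⋯bₗ*)*`, and symmetrically the reverse inequality, so the two
starred products are in fact equal.
-/

namespace PKA

variable {K : Type*} (P : PKA K)

theorem le_refl (a : K) : P.le a a := ⟨P.summable_self a, P.add_self a⟩

theorem le_trans {a b c : K} (hab : P.le a b) (hbc : P.le b c) : P.le a c := by
  obtain ⟨sab, eab⟩ := hab
  obtain ⟨sbc, ebc⟩ := hbc
  obtain ⟨sac, e⟩ := P.add_assoc a b c sab (by rwa [eab]) sbc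
  rw [ebc] at sac e
  exact ⟨sac, by rw [← e, eab, ebc]⟩

theorem le_antisymm {a b : K} (hab : P.le a b) (hba : P.le b a) : a = b := by
  obtain ⟨sab, eab⟩ := hab
  obtain ⟨-, eba⟩ := hba
  rw [← eba, ← (P.add_comm a b sab).2, eab]

theorem add_le {x y a : K} (hxy : P.summable x y) (hx : P.le x a) (hy : P.le y a) :
    P.le (P.add x y) a := by
  obtain ⟨sax, eax⟩ := P.add_comm x a hx.1
  obtain ⟨say, eay⟩ := P.add_comm y a hy.1
  rw [hx.2] at eax
  rw [hy.2] at eay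
  obtain ⟨sa_xy, e⟩ := P.add_assoc a x y sax (by rwa [← eax]) hxy
  obtain ⟨sxy_a, e'⟩ := P.add_comm a (P.add x y) sa_xy
  exact ⟨sxy_a, by rw [← e', ← e, ← eax, ← eay]⟩

theorem mul_le_mul_left {x y : K} (z : K) (hxy : P.le x y) :
    P.le (P.mul z x) (P.mul z y) := by
  obtain ⟨s, e⟩ := P.left_distrib x y z hxy.1
  exact ⟨s, by rw [← e, hxy.2]⟩

theorem mul_le_mul_right {x y : K} (z : K) (hxy : P.le x y) :
    P.le (P.mul x z) (P.mul y z) := by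
  obtain ⟨s, e⟩ := P.right_distrib x y z hxy.1
  exact ⟨s, by rw [← e, hxy.2]⟩

theorem mul_le_mul {a b c d : K} (hab : P.le a b) (hcd : P.le c d) :
    P.le (P.mul a c) (P.mul b d) :=
  P.le_trans (P.mul_le_mul_right c hab) (P.mul_le_mul_left b hcd)

theorem le_star (x : K) : P.le x (P.star x) := by
  have h := P.mul_le_mul_left x (P.one_le_star x)
  rw [P.mul_one] at h
  exact P.le_trans h (P.mul_star_le_star x)

theorem star_le_of_mul_le {a b : K} (h : P.le (P.mul a b) b) (hb : P.le P.one b) :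
    P.le (P.star a) b := by
  have h1 := P.mul_le_mul_left (P.star a) hb
  rw [P.mul_one] at h1
  exact P.le_trans h1 (P.star_ind_left a b h)

theorem star_mul_star_le (s : K) : P.le (P.mul (P.star s) (P.star s)) (P.star s) :=
  P.star_ind_left s (P.star s) (P.mul_star_le_star s)

theorem star_le_star_of_le_star {a s : K} (h : P.le a (P.star s)) :
    P.le (P.star a) (P.star s) :=
  P.star_le_of_mul_le (P.le_trans (P.mul_le_mul_right (P.star s) h) (P.star_mul_star_le s))
    (P.one_le_star s)

def starProd (l : List K) : K :=
  l.foldr (fun x acc => P.mul (P.star x) acc) P.one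

theorem starProd_cons (x : K) (l : List K) :
    P.starProd (x :: l) = P.mul (P.star x) (P.starProd l) := rfl

theorem one_le_starProd (l : List K) : P.le P.one (P.starProd l) := by
  induction l with
  | nil => exact P.le_refl P.one
  | cons y t ih =>
    have h := P.mul_le_mul (P.one_le_star y) ih
    rwa [P.mul_one, ← starProd_cons] at h

theorem le_starProd_of_mem {x : K} {l : List K} (hx : x ∈ l) : P.le x (P.starProd l) := by
  induction l with
  | nil => cases hx
  | cons y t ih =>
    rw [starProd_cons]
    rcases List.mem_cons.mp hx with rfl | hmem
    · have h := P.mul_le_mul (P.le_star x) (P.one_le_starProd t)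
      rwa [P.mul_one] at h
    · have h := P.mul_le_mul (P.one_le_star y) (ih hmem)
      rwa [P.one_mul] at h

theorem le_listStar_of_mem {x : K} {l : List K} (hx : x ∈ l) : P.le x (P.listStar l) :=
  P.le_trans (P.le_starProd_of_mem hx) (P.le_star _)

theorem starProd_le {M : K} {l : List K} (h1 : P.le P.one M) (hMM : P.le (P.mul M M) M)
    (hl : ∀ x ∈ l, P.le (P.star x) M) : P.le (P.starProd l) M := by
  induction l with
  | nil => exact h1
  | cons y t ih =>
    have h := P.mul_le_mul (hl y List.mem_cons_self)
      (ih fun x hx => hl x (List.mem_cons_of_mem y hx))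
    exact P.le_trans h hMM

theorem listStar_le_listStar {la lb : List K} (hle : ∀ x ∈ la, P.le x (P.listStar lb)) :
    P.le (P.listStar la) (P.listStar lb) := by
  have hprod : P.le (P.starProd la) (P.listStar lb) :=
    P.starProd_le (P.one_le_star _) (P.star_mul_star_le _)
      fun x hx => P.star_le_star_of_le_star (hle x hx)
  exact P.star_le_star_of_le_star hprod

theorem isStarIdeal_setOf_le (h : P.StarContinuous) (M : K) : P.IsStarIdeal {x | P.le x M} :=
  ⟨⟨M, P.le_refl M⟩, fun _ ha _ hb hs => P.add_le hs ha hb,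
    fun _ _ hy hxy => P.le_trans hxy hy, fun a b c hn => (h a b c).2 M hn⟩

theorem subset_gen (A : Set K) : A ⊆ P.gen A :=
  fun _ hx _ hI => hI.2 hx

theorem le_of_mem_gen (h : P.StarContinuous) {A : Set K} {M x : K}
    (hA : ∀ a ∈ A, P.le a M) (hx : x ∈ P.gen A) : P.le x M :=
  hx _ ⟨P.isStarIdeal_setOf_le h M, hA⟩

theorem listStar_le_listStar_of_gen_subset (h : P.StarContinuous) {la lb : List K}
    (hsub : P.gen {x | x ∈ la} ⊆ P.gen {x | x ∈ lb}) : P.le (P.listStar la) (P.listStar lb) :=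
  P.listStar_le_listStar fun _ hx =>
    P.le_of_mem_gen h (fun _ => P.le_listStar_of_mem) (hsub (P.subset_gen _ hx))

end PKA

/-- If gen {a_1,…,a_k} = gen {b_1,…,b_l} then the generated star-ideals of the
corresponding starred products coincide. -/
theorem pka_gen_star_welldef {K : Type*} (P : PKA K) (h : P.StarContinuous) :
    ∀ la lb : List K,
      P.gen {x | x ∈ la} = P.gen {x | x ∈ lb} →
      P.gen {P.listStar la} = P.gen {P.listStar lb} := by
  intro la lb hgen
  rw [P.le_antisymm (P.listStar_le_listStar_of_gen_subset h hgen.subset)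
    (P.listStar_le_listStar_of_gen_subset h hgen.symm.subset)]
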